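/- arXiv:1609.05607 — 2 statements merged into one kernel-verified Lean document; each statement's English description precedes it below -/
import Mathlib

section
/- Let $f, g, h$ be nonnegative continuous functions on $(0,t]$ with $f$ differentiable, satisfying $f'(s) + g(s) \le h(s)$ for $0 < s \le t$. Let $b > -1$ and assume $\int_0^t s^b f(s)\,ds < \infty$ and $\lim_{s\downarrow 0} s^{1+b} f(s) = 0$. Then $t^{1+b} f(t) + \int_0^t s^{1+b} g(s)\,ds \le \int_0^t s^{1+b} h(s)\,ds + (1+b)\int_0^t s^b f(s)\,ds$. -/
open MeasureTheory Set Filter Topology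

/-- Initial behavior from a differential inequality (Lemma 5.1 of the paper). -/
theorem initial_behavior_of_diff_ineq
    (t b : ℝ) (ht : 0 < t) (hb : -1 < b)
    (f g h f' : ℝ → ℝ)
    (hf_cont : ContinuousOn f (Ioc 0 t))
    (hg_cont : ContinuousOn g (Ioc 0 t))
    (hh_cont : ContinuousOn h (Ioc 0 t))
    (hf_nonneg : ∀ s ∈ Ioc (0:ℝ) t, 0 ≤ f s)
    (hg_nonneg : ∀ s ∈ Ioc (0:ℝ) t, 0 ≤ g s)
    (hh_nonneg : ∀ s ∈ Ioc (0:ℝ) t, 0 ≤ h s)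
    (hderiv : ∀ s ∈ Ioc (0:ℝ) t, HasDerivAt f (f' s) s)
    (hineq : ∀ s ∈ Ioc (0:ℝ) t, f' s + g s ≤ h s)
    (hint_f : IntegrableOn (fun s => s ^ b * f s) (Ioc 0 t))
    (hint_h : IntegrableOn (fun s => s ^ (1 + b) * h s) (Ioc 0 t))
    (hlim : Tendsto (fun s => s ^ (1 + b) * f s) (nhdsWithin 0 (Ioi 0)) (nhds 0)) :
    t ^ (1 + b) * f t + ∫ s in Ioc 0 t, s ^ (1 + b) * g s
      ≤ (∫ s in Ioc 0 t, s ^ (1 + b) * h s)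
        + (1 + b) * ∫ s in Ioc 0 t, s ^ b * f s := by
  -- notation
  set F : ℝ → ℝ := fun s => s ^ (1 + b) * f s with hF
  set G : ℝ → ℝ := fun s => s ^ (1 + b) * g s with hG
  set H : ℝ → ℝ := fun s => s ^ (1 + b) * h s with hH
  set Fb : ℝ → ℝ := fun s => s ^ b * f s with hFb
  have crpow : ∀ c : ℝ, ContinuousOn (fun s : ℝ => s ^ c) (Ioc 0 t) := fun c s hs =>
    (Real.continuousAt_rpow_const _ _ (Or.inl hs.1.ne')).continuousWithinAt
  have hGcont : ContinuousOn G (Ioc 0 t) := (crpow _).mul hg_cont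
  have hHcont : ContinuousOn H (Ioc 0 t) := (crpow _).mul hh_cont
  have hFbcont : ContinuousOn Fb (Ioc 0 t) := (crpow _).mul hf_cont
  have hFcont : ContinuousOn F (Ioc 0 t) := (crpow _).mul hf_cont
  set C : ℝ := (∫ s in Ioc 0 t, H s) + (1 + b) * ∫ s in Ioc 0 t, Fb s with hC
  -- nonnegativity of integrands
  have hGnn : ∀ s ∈ Ioc (0:ℝ) t, 0 ≤ G s := fun s hs =>
    mul_nonneg (Real.rpow_nonneg hs.1.le _) (hg_nonneg s hs)
  have hHnn : ∀ s ∈ Ioc (0:ℝ) t, 0 ≤ H s := fun s hs =>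
    mul_nonneg (Real.rpow_nonneg hs.1.le _) (hh_nonneg s hs)
  have hFbnn : ∀ s ∈ Ioc (0:ℝ) t, 0 ≤ Fb s := fun s hs =>
    mul_nonneg (Real.rpow_nonneg hs.1.le _) (hf_nonneg s hs)
  -- key inequality for each ε ∈ (0, t]
  have key : ∀ ε ∈ Ioc (0:ℝ) t,
      F t + ∫ s in Ioc ε t, G s ≤ F ε + C := by
    intro ε hε
    obtain ⟨hε0, hεt⟩ := hε
    have hsub : Icc ε t ⊆ Ioc 0 t := fun x hx => ⟨lt_of_lt_of_le hε0 hx.1, hx.2⟩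
    set ψ : ℝ → ℝ := fun s => (1 + b) * s ^ b * f s + s ^ (1 + b) * (h s - g s) with hψ
    have hψc : ContinuousOn ψ (Ioc 0 t) :=
      ((continuousOn_const.mul (crpow b)).mul hf_cont).add
        ((crpow (1 + b)).mul (hh_cont.sub hg_cont))
    have hψint : ∀ s ∈ Icc ε t, IntervalIntegrable ψ volume ε s := by
      intro s hs
      apply ContinuousOn.intervalIntegrable
      apply hψc.mono
      rw [uIcc_of_le hs.1]
      exact fun x hx => ⟨lt_of_lt_of_le hε0 hx.1, le_trans hx.2 hs.2⟩
    set Φ : ℝ → ℝ := fun s => ∫ u in ε..s, ψ u with hΦ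
    have hΦcont : ContinuousOn Φ (Icc ε t) := by
      have := intervalIntegral.continuousOn_primitive_interval (a := ε) (b := t) (μ := volume)
        ((hψc.mono (by rw [uIcc_of_le hεt]; exact hsub)).integrableOn_compact isCompact_uIcc)
      rwa [uIcc_of_le hεt] at this
    have hΦderiv : ∀ s ∈ Ioo ε t, HasDerivAt Φ (ψ s) s := by
      intro s hs
      have hsmem : s ∈ Ioo (0:ℝ) t := ⟨lt_trans hε0 hs.1, hs.2⟩
      have hψct : ∀ x ∈ Ioo (0:ℝ) t, ContinuousAt ψ x := fun x hx =>
        (hψc.mono Ioo_subset_Ioc_self).continuousAt (isOpen_Ioo.mem_nhds hx)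
      exact intervalIntegral.integral_hasDerivAt_right
        (hψint s ⟨hs.1.le, hs.2.le⟩)
        (ContinuousAt.stronglyMeasurableAtFilter isOpen_Ioo hψct s hsmem)
        (hψct s hsmem)
    -- derivative of F
    have hFderiv : ∀ s ∈ Ioo ε t,
        HasDerivAt F ((1 + b) * s ^ b * f s + s ^ (1 + b) * f' s) s := by
      intro s hs
      have hs0 : (0:ℝ) < s := lt_trans hε0 hs.1
      have h1 : HasDerivAt (fun x : ℝ => x ^ (1 + b)) ((1 + b) * s ^ b) s := by
        have := Real.hasDerivAt_rpow_const (x := s) (p := 1 + b) (Or.inl hs0.ne')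
        have hexp : 1 + b - 1 = b := by ring
        rwa [hexp] at this
      exact h1.mul (hderiv s ⟨hs0, hs.2.le⟩)
    -- φ = F - Φ is antitone on [ε, t]
    have hanti : AntitoneOn (fun s => F s - Φ s) (Icc ε t) := by
      apply antitoneOn_of_deriv_nonpos (convex_Icc ε t)
        ((hFcont.mono hsub).sub hΦcont)
      · intro s hs
        rw [interior_Icc] at hs
        exact ((hFderiv s hs).sub (hΦderiv s hs)).differentiableAt.differentiableWithinAt
      · intro s hs
        rw [interior_Icc] at hs
        have hs0 : (0:ℝ) < s := lt_trans hε0 hs.1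
        rw [((hFderiv s hs).sub (hΦderiv s hs)).deriv]
        have : (1 + b) * s ^ b * f s + s ^ (1 + b) * f' s - ψ s
            = s ^ (1 + b) * (f' s + g s - h s) := by simp only [hψ]; ring
        rw [this]
        exact mul_nonpos_of_nonneg_of_nonpos (Real.rpow_nonneg hs0.le _)
          (sub_nonpos.mpr (hineq s ⟨hs0, hs.2.le⟩))
    have hmain : F t ≤ F ε + Φ t := by
      have h1 := hanti (left_mem_Icc.mpr hεt) (right_mem_Icc.mpr hεt) hεt
      have hΦε : Φ ε = 0 := intervalIntegral.integral_same
      simp only [hΦε, sub_zero] at h1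
      linarith
    -- compute Φ t
    have hIoc : ∀ (φ : ℝ → ℝ), ContinuousOn φ (Ioc 0 t) →
        IntervalIntegrable φ volume ε t := by
      intro φ hφ
      apply ContinuousOn.intervalIntegrable
      apply hφ.mono
      rw [uIcc_of_le hεt]; exact hsub
    have hΦt : Φ t = (1 + b) * (∫ s in ε..t, Fb s) + ((∫ s in ε..t, H s) - ∫ s in ε..t, G s) := by
      have e1 : ∀ s ∈ uIcc ε t, ψ s = (1 + b) * Fb s + (H s - G s) := by
        intro s _; simp only [hψ, hFb, hH, hG]; ring
      show (∫ u in ε..t, ψ u) = _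
      rw [intervalIntegral.integral_congr e1]
      rw [intervalIntegral.integral_add ((hIoc Fb hFbcont).const_mul _)
        ((hIoc H hHcont).sub (hIoc G hGcont)),
        intervalIntegral.integral_const_mul,
        intervalIntegral.integral_sub (hIoc H hHcont) (hIoc G hGcont)]
    -- pass from interval integrals to set integrals and enlarge the domain
    have hset : ∀ (φ : ℝ → ℝ), (∫ s in ε..t, φ s) = ∫ s in Ioc ε t, φ s := fun φ =>
      intervalIntegral.integral_of_le hεt
    have hmono : ∀ (φ : ℝ → ℝ), IntegrableOn φ (Ioc 0 t) → (∀ s ∈ Ioc (0:ℝ) t, 0 ≤ φ s) →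
        (∫ s in Ioc ε t, φ s) ≤ ∫ s in Ioc 0 t, φ s := by
      intro φ hφi hφnn
      apply setIntegral_mono_set hφi
      · filter_upwards [ae_restrict_mem measurableSet_Ioc] with x hx using hφnn x hx
      · exact HasSubset.Subset.eventuallyLE (Ioc_subset_Ioc_left hε0.le)
    have hfin : F t + ∫ s in Ioc ε t, G s ≤ F ε + ((1 + b) * ∫ s in Ioc ε t, Fb s)
        + ∫ s in Ioc ε t, H s := by
      rw [hΦt, hset Fb, hset H, hset G] at hmain
      linarith
    have h2 : (1 + b) * (∫ s in Ioc ε t, Fb s) ≤ (1 + b) * ∫ s in Ioc 0 t, Fb s :=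
      mul_le_mul_of_nonneg_left (hmono Fb hint_f hFbnn) (by linarith)
    have h3 : (∫ s in Ioc ε t, H s) ≤ ∫ s in Ioc 0 t, H s := hmono H hint_h hHnn
    rw [hC]
    linarith
  -- the sequence εₙ = t / (n+1)
  set a : ℕ → ℝ := fun n => t / (n + 1) with ha
  have ha_mem : ∀ n, a n ∈ Ioc (0:ℝ) t := by
    intro n
    constructor
    · positivity
    · rw [ha, div_le_iff₀ (by positivity)]
      nlinarith [ht.le, (Nat.cast_nonneg n : (0:ℝ) ≤ n)]
  have ha_anti : Antitone a := by
    intro n m hnm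
    apply div_le_div_of_nonneg_left ht.le (by positivity)
    have : (n:ℝ) ≤ m := Nat.cast_le.mpr hnm
    linarith
  have ha_tendsto : Tendsto a atTop (𝓝 0) := by
    have h1 : Tendsto (fun n : ℕ => (1:ℝ) / (n + 1)) atTop (𝓝 0) :=
      tendsto_one_div_add_atTop_nhds_zero_nat
    have := h1.const_mul t
    simpa [ha, div_eq_mul_inv, mul_comm] using this
  have ha_tendsto' : Tendsto a atTop (𝓝[>] 0) :=
    tendsto_nhdsWithin_of_tendsto_nhds_of_eventually_within _ ha_tendsto
      (Eventually.of_forall fun n => (ha_mem n).1)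
  have hFa : Tendsto (fun n => F (a n)) atTop (𝓝 0) := hlim.comp ha_tendsto'
  -- sets
  set S : ℕ → Set ℝ := fun n => Ioc (a n) t with hS
  have hSmono : Monotone S := fun n m hnm => Ioc_subset_Ioc_left (ha_anti hnm)
  have hSunion : (⋃ n, S n) = Ioc 0 t := by
    ext x
    simp only [hS, mem_iUnion, mem_Ioc]
    constructor
    · rintro ⟨n, hn1, hn2⟩
      exact ⟨lt_trans (ha_mem n).1 hn1, hn2⟩
    · rintro ⟨hx1, hx2⟩
      obtain ⟨n, hn⟩ := (ha_tendsto.eventually_lt_const hx1).exists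
      exact ⟨n, hn, hx2⟩
  -- integrability of G on Ioc 0 t
  have hGint_n : ∀ n, IntegrableOn G (Ioc (a n) t) := by
    intro n
    have hsub' : Icc (a n) t ⊆ Ioc 0 t := fun x hx => ⟨lt_of_lt_of_le (ha_mem n).1 hx.1, hx.2⟩
    exact ((hGcont.mono hsub').integrableOn_compact isCompact_Icc).mono_set Ioc_subset_Icc_self
  have hFt_nonneg : 0 ≤ F t :=
    mul_nonneg (Real.rpow_nonneg ht.le _) (hf_nonneg t ⟨ht, le_refl t⟩)
  have hGnorm : ∀ n, (∫ s in Ioc (a n) t, ‖G s‖) = ∫ s in Ioc (a n) t, G s := by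
    intro n
    apply setIntegral_congr_fun measurableSet_Ioc
    intro x hx
    exact Real.norm_of_nonneg (hGnn x ⟨lt_trans (ha_mem n).1 hx.1, hx.2⟩)
  have hGbound : ∀ᶠ n in atTop, (∫ s in Ioc (a n) t, ‖G s‖) ≤ 1 + C := by
    filter_upwards [hFa.eventually_le_const (by norm_num : (0:ℝ) < 1)] with n hn
    rw [hGnorm n]
    have := key (a n) (ha_mem n)
    linarith
  have hGint : IntegrableOn G (Ioc 0 t) :=
    integrableOn_Ioc_of_intervalIntegral_norm_bounded_left hGint_n ha_tendsto hGbound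
  have hGtendsto : Tendsto (fun n => ∫ s in S n, G s) atTop (𝓝 (∫ s in Ioc 0 t, G s)) := by
    have := tendsto_setIntegral_of_monotone (fun n => measurableSet_Ioc) hSmono
      (hSunion ▸ hGint)
    rwa [hSunion] at this
  have t1 : Tendsto (fun n => F t + ∫ s in S n, G s) atTop
      (𝓝 (F t + ∫ s in Ioc 0 t, G s)) := tendsto_const_nhds.add hGtendsto
  have t2 : Tendsto (fun n => F (a n) + C) atTop (𝓝 (0 + C)) :=
    hFa.add tendsto_const_nhds
  have hfinal : F t + (∫ s in Ioc 0 t, G s) ≤ 0 + C :=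
    le_of_tendsto_of_tendsto' t1 t2 fun n => key (a n) (ha_mem n)
  rw [hC] at hfinal
  simp only [hF, hG, hH, hFb] at hfinal ⊢
  linarith
end

section
/- Let $f, g, h : (0,t] \to [0,\infty)$ be continuous with $f$ differentiable and $f'(s) + g(s) \le h(s)$ on $(0,t]$. Let $\psi : [0,t] \to [0,\infty)$ be nondecreasing, $b > -1$, and assume $\int_0^t s^b e^{-\psi(s)} f(s)\,ds < \infty$ and $s^{1+b} f(s) \to 0$ as $s \downarrow 0$. If moreover $f'(s) - \psi'(s) f(s) + g(s) \le h(s)$ with $\psi$ differentiable, then $t^{1+b} f(t) + \int_0^t s^{1+b} g(s)\,ds \le e^{\psi(t)}\Big( (1+b) \int_0^t s^b f(s)\,ds + \int_0^t s^{1+b} h(s)\,ds \Big)$. -/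
/-!
With `F = e^{-ψ} f` the hypothesis becomes `F' + e^{-ψ(t)} g ≤ h`, because `e^{-ψ(t)} ≤ e^{-ψ(s)} ≤ 1`
for `s ≤ t`. For such `F` one integrates `(s^{1+b} F)' = (1+b) s^b F + s^{1+b} F'` over `[ε, t]` and
lets `ε → 0`, where `s^{1+b} F(s)` vanishes. Multiplying the result by `e^{ψ(t)}` and using
`e^{-ψ} f ≤ f` on the right gives the claim.
-/

open MeasureTheory Set Filter Topology

theorem le_setIntegral_Ioc_of_hasDerivAt_of_tendsto_zero {P P' D : ℝ → ℝ} {t : ℝ} (ht : 0 < t)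
    (hP : ∀ s ∈ Ioc 0 t, HasDerivAt P (P' s) s) (hP0 : Tendsto P (𝓝[>] 0) (𝓝 0))
    (hD : IntegrableOn D (Ioc 0 t)) (hle : ∀ s ∈ Ioc 0 t, P' s ≤ D s) :
    P t ≤ ∫ s in Ioc 0 t, D s := by
  have h_lower : Tendsto (fun ε => P t - P ε) (𝓝[>] 0) (𝓝 (P t - 0)) :=
    tendsto_const_nhds.sub hP0
  have h_upper : Tendsto (fun ε => ∫ s in ε..t, D s) (𝓝[>] 0) (𝓝 (∫ s in 0..t, D s)) := by
    have hD_Icc : IntegrableOn D (uIcc 0 t) := by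
      rwa [uIcc_of_le ht.le, integrableOn_Icc_iff_integrableOn_Ioc]
    have h_mem : uIcc 0 t ∈ 𝓝[>] (0 : ℝ) := by
      rw [uIcc_of_le ht.le]
      exact mem_of_superset (Ioo_mem_nhdsGT ht) Ioo_subset_Icc_self
    exact ((intervalIntegral.continuousOn_primitive_interval_left hD_Icc) 0
      left_mem_uIcc).tendsto.mono_left (nhdsWithin_le_of_mem h_mem)
  have h_step : ∀ᶠ ε in 𝓝[>] 0, P t - P ε ≤ ∫ s in ε..t, D s := by
    filter_upwards [Ioo_mem_nhdsGT ht] with ε hε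
    have hsub : Icc ε t ⊆ Ioc 0 t := Icc_subset_Ioc_iff hε.2.le |>.2 ⟨hε.1, le_rfl⟩
    exact intervalIntegral.sub_le_integral_of_hasDeriv_right_of_le hε.2.le
      (fun s hs => (hP s (hsub hs)).continuousAt.continuousWithinAt)
      (fun s hs => (hP s (hsub (Ioo_subset_Icc_self hs))).hasDerivWithinAt)
      (hD.mono_set hsub) (fun s hs => hle s (hsub (Ioo_subset_Icc_self hs)))
  simpa [intervalIntegral.integral_of_le ht.le] using
    le_of_tendsto_of_tendsto h_lower h_upper h_step

theorem add_setIntegral_Ioc_le_of_hasDerivAt_of_tendsto_zero {P P' Q R : ℝ → ℝ} {t : ℝ}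
    (ht : 0 < t) (hP : ∀ s ∈ Ioc 0 t, HasDerivAt P (P' s) s) (hP0 : Tendsto P (𝓝[>] 0) (𝓝 0))
    (hQ : ∀ s ∈ Ioc 0 t, 0 ≤ Q s) (hR : IntegrableOn R (Ioc 0 t))
    (hle : ∀ s ∈ Ioc 0 t, P' s + Q s ≤ R s) :
    P t + ∫ s in Ioc 0 t, Q s ≤ ∫ s in Ioc 0 t, R s := by
  by_cases hQ_int : IntegrableOn Q (Ioc 0 t)
  · have h := le_setIntegral_Ioc_of_hasDerivAt_of_tendsto_zero (D := fun s => R s - Q s) ht hP hP0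
      (hR.sub hQ_int) fun s hs => le_sub_iff_add_le.2 (hle s hs)
    rw [integral_sub hR hQ_int] at h
    linarith
  · -- the integral of `Q` is the junk value `0`
    rw [integral_undef hQ_int, add_zero]
    exact le_setIntegral_Ioc_of_hasDerivAt_of_tendsto_zero ht hP hP0 hR
      fun s hs => by linarith [hle s hs, hQ s hs]

theorem rpow_mul_add_setIntegral_Ioc_le {F F' G H : ℝ → ℝ} {t b : ℝ} (ht : 0 < t)
    (hF : ∀ s ∈ Ioc 0 t, HasDerivAt F (F' s) s)
    (hF0 : Tendsto (fun s => s ^ (1 + b) * F s) (𝓝[>] 0) (𝓝 0))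
    (hG : ∀ s ∈ Ioc 0 t, 0 ≤ G s) (hle : ∀ s ∈ Ioc 0 t, F' s + G s ≤ H s)
    (hF_int : IntegrableOn (fun s => s ^ b * F s) (Ioc 0 t))
    (hH_int : IntegrableOn (fun s => s ^ (1 + b) * H s) (Ioc 0 t)) :
    t ^ (1 + b) * F t + ∫ s in Ioc 0 t, s ^ (1 + b) * G s
      ≤ (1 + b) * (∫ s in Ioc 0 t, s ^ b * F s) + ∫ s in Ioc 0 t, s ^ (1 + b) * H s := by
  have hP : ∀ s ∈ Ioc 0 t, HasDerivAt (fun s => s ^ (1 + b) * F s)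
      ((1 + b) * s ^ b * F s + s ^ (1 + b) * F' s) s := fun s hs => by
    have h := Real.hasDerivAt_rpow_const (p := 1 + b) (Or.inl hs.1.ne')
    rw [add_sub_cancel_left] at h
    exact h.mul (hF s hs)
  have h := add_setIntegral_Ioc_le_of_hasDerivAt_of_tendsto_zero
    (Q := fun s => s ^ (1 + b) * G s) (R := fun s => (1 + b) * (s ^ b * F s) + s ^ (1 + b) * H s)
    ht hP hF0 (fun s hs => mul_nonneg (Real.rpow_nonneg hs.1.le _) (hG s hs))
    ((hF_int.const_mul (1 + b)).add hH_int) fun s hs => by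
      have := mul_le_mul_of_nonneg_left (hle s hs) (Real.rpow_nonneg hs.1.le (1 + b))
      linarith
  rwa [integral_add (hF_int.const_mul _) hH_int, integral_const_mul] at h

theorem Filter.Tendsto.exp_neg_mul {α : Type*} {l : Filter α} {u ψ : α → ℝ}
    (hu : Tendsto u l (𝓝 0)) (hψ : ∀ᶠ s in l, 0 ≤ ψ s) :
    Tendsto (fun s => Real.exp (-ψ s) * u s) l (𝓝 0) := by
  refine isBoundedUnder_le_mul_tendsto_zero (isBoundedUnder_of_eventually_le (a := 1) ?_) hu
  filter_upwards [hψ] with s hs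
  simpa using hs

theorem exp_neg_mul_add_exp_neg_mul_le {p q u g h : ℝ} (hpq : p ≤ q) (hp : 0 ≤ p) (hg : 0 ≤ g)
    (hh : 0 ≤ h) (hu : u + g ≤ h) : Real.exp (-p) * u + Real.exp (-q) * g ≤ h := by
  have hg_le : Real.exp (-q) * g ≤ Real.exp (-p) * g :=
    mul_le_mul_of_nonneg_right (Real.exp_le_exp.2 (neg_le_neg hpq)) hg
  have hh_le : Real.exp (-p) * h ≤ h :=
    mul_le_of_le_one_left hh (Real.exp_le_one_iff.2 (neg_nonpos.2 hp))
  have := mul_le_mul_of_nonneg_left hu (Real.exp_pos (-p)).le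
  linarith [mul_add (Real.exp (-p)) u g]

theorem setIntegral_exp_neg_mul_le {α : Type*} [MeasurableSpace α] {μ : Measure α} {S : Set α}
    (hS : MeasurableSet S) {u ψ : α → ℝ} {M : ℝ} (hu : ∀ s ∈ S, 0 ≤ u s)
    (hu_meas : AEStronglyMeasurable u (μ.restrict S)) (hψ_nonneg : ∀ s ∈ S, 0 ≤ ψ s)
    (hψ_le : ∀ s ∈ S, ψ s ≤ M) (hint : IntegrableOn (fun s => Real.exp (-ψ s) * u s) S μ) :
    ∫ s in S, Real.exp (-ψ s) * u s ∂μ ≤ ∫ s in S, u s ∂μ := by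
  have hu_le : ∀ s ∈ S, u s ≤ Real.exp M * (Real.exp (-ψ s) * u s) := fun s hs =>
    calc u s ≤ Real.exp (M - ψ s) * u s :=
          le_mul_of_one_le_left (hu s hs) (Real.one_le_exp (sub_nonneg.2 (hψ_le s hs)))
      _ = _ := by rw [sub_eq_add_neg, Real.exp_add]; ring
  have hu_int : IntegrableOn u S μ := by
    refine (hint.const_mul (Real.exp M)).mono hu_meas ?_
    filter_upwards [ae_restrict_mem hS] with s hs
    rw [Real.norm_of_nonneg (hu s hs)]
    exact (hu_le s hs).trans (le_abs_self _)
  exact setIntegral_mono_on hint hu_int hS fun s hs =>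
    mul_le_of_le_one_left (hu s hs) (Real.exp_le_one_iff.2 (neg_nonpos.2 (hψ_nonneg s hs)))

theorem weighted_initial_behavior_general
    (t b : ℝ) (ht : 0 < t) (hb : -1 < b)
    (f g h f' ψ ψ' : ℝ → ℝ)
    (hf_nonneg : ∀ s ∈ Ioc (0:ℝ) t, 0 ≤ f s)
    (hg_nonneg : ∀ s ∈ Ioc (0:ℝ) t, 0 ≤ g s)
    (hh_nonneg : ∀ s ∈ Ioc (0:ℝ) t, 0 ≤ h s)
    (hderiv : ∀ s ∈ Ioc (0:ℝ) t, HasDerivAt f (f' s) s)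
    (hψ_nonneg : ∀ s ∈ Icc (0:ℝ) t, 0 ≤ ψ s)
    (hψ_mono : MonotoneOn ψ (Icc 0 t))
    (hψ_deriv : ∀ s ∈ Ioc (0:ℝ) t, HasDerivAt ψ (ψ' s) s)
    (hint_f : IntegrableOn (fun s => s ^ b * Real.exp (-ψ s) * f s) (Ioc 0 t))
    (hint_h : IntegrableOn (fun s => s ^ (1 + b) * h s) (Ioc 0 t))
    (hlim : Tendsto (fun s => s ^ (1 + b) * f s) (nhdsWithin 0 (Ioi 0)) (nhds 0))
    (hineqψ : ∀ s ∈ Ioc (0:ℝ) t, f' s - ψ' s * f s + g s ≤ h s) :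
    t ^ (1 + b) * f t + ∫ s in Ioc 0 t, s ^ (1 + b) * g s
      ≤ Real.exp (ψ t) *
          ((1 + b) * (∫ s in Ioc 0 t, s ^ b * f s)
            + ∫ s in Ioc 0 t, s ^ (1 + b) * h s) := by
  have hψ_nonneg' : ∀ s ∈ Ioc 0 t, 0 ≤ ψ s := fun s hs => hψ_nonneg s (Ioc_subset_Icc_self hs)
  have hψ_le : ∀ s ∈ Ioc 0 t, ψ s ≤ ψ t := fun s hs =>
    hψ_mono (Ioc_subset_Icc_self hs) (right_mem_Icc.2 ht.le) hs.2
  have hF : ∀ s ∈ Ioc 0 t, HasDerivAt (fun s => Real.exp (-ψ s) * f s)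
      (Real.exp (-ψ s) * (f' s - ψ' s * f s)) s := fun s hs =>
    ((hψ_deriv s hs).neg.exp.mul (hderiv s hs)).congr_deriv (by rw [Pi.neg_apply]; ring)
  have hF0 : Tendsto (fun s => s ^ (1 + b) * (Real.exp (-ψ s) * f s)) (𝓝[>] 0) (𝓝 0) := by
    simpa only [mul_left_comm (Real.exp _)] using hlim.exp_neg_mul
      (eventually_of_mem (Ioc_mem_nhdsGT ht) hψ_nonneg')
  have hF_int : IntegrableOn (fun s => s ^ b * (Real.exp (-ψ s) * f s)) (Ioc 0 t) := by
    simpa only [mul_assoc] using hint_f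
  have hF_le : ∫ s in Ioc 0 t, s ^ b * (Real.exp (-ψ s) * f s) ≤ ∫ s in Ioc 0 t, s ^ b * f s := by
    have hf_meas : AEStronglyMeasurable (fun s => s ^ b * f s) (volume.restrict (Ioc 0 t)) :=
      ContinuousOn.aestronglyMeasurable (fun s hs => ((Real.continuousAt_rpow_const s b
        (Or.inl hs.1.ne')).mul (hderiv s hs).continuousAt).continuousWithinAt) measurableSet_Ioc
    simpa only [mul_left_comm (Real.exp _)] using setIntegral_exp_neg_mul_le measurableSet_Ioc
      (fun s hs => mul_nonneg (Real.rpow_nonneg hs.1.le b) (hf_nonneg s hs)) hf_meas hψ_nonneg'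
      hψ_le (by simpa only [mul_left_comm (Real.exp _)] using hF_int)
  -- with `e^{-ψ(t)} g` as the dissipation term, its constant factor comes out of the integral
  have key := rpow_mul_add_setIntegral_Ioc_le (G := fun s => Real.exp (-ψ t) * g s) ht hF hF0
    (fun s hs => mul_nonneg (Real.exp_pos _).le (hg_nonneg s hs))
    (fun s hs => exp_neg_mul_add_exp_neg_mul_le (hψ_le s hs) (hψ_nonneg' s hs) (hg_nonneg s hs)
      (hh_nonneg s hs) (hineqψ s hs)) hF_int hint_h
  calc t ^ (1 + b) * f t + ∫ s in Ioc 0 t, s ^ (1 + b) * g s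
      = Real.exp (ψ t) * (t ^ (1 + b) * (Real.exp (-ψ t) * f t)
          + ∫ s in Ioc 0 t, s ^ (1 + b) * (Real.exp (-ψ t) * g s)) := by
        simp_rw [mul_left_comm _ (Real.exp (-ψ t)), integral_const_mul, Real.exp_neg]
        field_simp
    _ ≤ _ := by
        have h1b : 0 ≤ 1 + b := by linarith
        exact mul_le_mul_of_nonneg_left (key.trans (by gcongr)) (Real.exp_nonneg _)

/-- Weighted initial-behavior inequality with integrating factor `e^{-ψ}`. -/
theorem weighted_initial_behavior
    (t b : ℝ) (ht : 0 < t) (hb : -1 < b)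
    (f g h f' ψ ψ' : ℝ → ℝ)
    (hf_cont : ContinuousOn f (Ioc 0 t))
    (hg_cont : ContinuousOn g (Ioc 0 t))
    (hh_cont : ContinuousOn h (Ioc 0 t))
    (hf_nonneg : ∀ s ∈ Ioc (0:ℝ) t, 0 ≤ f s)
    (hg_nonneg : ∀ s ∈ Ioc (0:ℝ) t, 0 ≤ g s)
    (hh_nonneg : ∀ s ∈ Ioc (0:ℝ) t, 0 ≤ h s)
    (hderiv : ∀ s ∈ Ioc (0:ℝ) t, HasDerivAt f (f' s) s)
    (hineq : ∀ s ∈ Ioc (0:ℝ) t, f' s + g s ≤ h s)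
    (hψ_nonneg : ∀ s ∈ Icc (0:ℝ) t, 0 ≤ ψ s)
    (hψ_mono : MonotoneOn ψ (Icc 0 t))
    (hψ_deriv : ∀ s ∈ Ioc (0:ℝ) t, HasDerivAt ψ (ψ' s) s)
    (hψ_cont : ContinuousOn ψ (Icc 0 t))
    (hint_f : IntegrableOn (fun s => s ^ b * Real.exp (-ψ s) * f s) (Ioc 0 t))
    (hint_h : IntegrableOn (fun s => s ^ (1 + b) * h s) (Ioc 0 t))
    (hlim : Tendsto (fun s => s ^ (1 + b) * f s) (nhdsWithin 0 (Ioi 0)) (nhds 0))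
    (hineqψ : ∀ s ∈ Ioc (0:ℝ) t, f' s - ψ' s * f s + g s ≤ h s) :
    t ^ (1 + b) * f t + ∫ s in Ioc 0 t, s ^ (1 + b) * g s
      ≤ Real.exp (ψ t) *
          ((1 + b) * (∫ s in Ioc 0 t, s ^ b * f s)
            + ∫ s in Ioc 0 t, s ^ (1 + b) * h s) :=
  weighted_initial_behavior_general t b ht hb f g h f' ψ ψ' hf_nonneg hg_nonneg hh_nonneg hderiv
    hψ_nonneg hψ_mono hψ_deriv hint_f hint_h hlim hineqψ
end
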